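/- arXiv:2008.13010 — 2 statements merged into one kernel-verified Lean document; each statement's English description precedes it below -/
import Mathlib

section
/- Let 𝒞 ⊆ ℝ^{n+m} and 𝒫 ⊆ ℝⁿ be proper C-sets and let A ∈ ℝ^{n×n}, B ∈ ℝ^{n×m}. Then for every (x,u) ∈ ℝⁿ × ℝᵐ, γ(𝒞,(x,u)) + γ(𝒫, Ax+Bu) = γ((𝒞* ⊕ Mᵀ𝒫*)*, (x,u)), i.e. the sum of the gauge of 𝒞 at (x,u) and the gauge of 𝒫 at Ax+Bu equals the gauge at (x,u) of the polar of the Minkowski sum of 𝒞* and the image Mᵀ𝒫*. -/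
open Pointwise Filter Topology Matrix

noncomputable section

/-- ℝⁿ with the standard (Euclidean) inner product. -/
abbrev Rsp (n : ℕ) := EuclideanSpace ℝ (Fin n)

/-- ℝ^{n+m} realized as the L²-product ℝⁿ × ℝᵐ. -/
abbrev Rsp2 (n m : ℕ) := WithLp 2 (Rsp n × Rsp m)

/-- A C-set: compact, convex, containing the origin. -/
def IsCSet {E : Type*} [NormedAddCommGroup E] [NormedSpace ℝ E] (X : Set E) : Prop :=
  IsCompact X ∧ Convex ℝ X ∧ (0 : E) ∈ X

/-- A proper C-set: a C-set containing the origin in its interior. -/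
def IsProperCSet {E : Type*} [NormedAddCommGroup E] [NormedSpace ℝ E] (X : Set E) : Prop :=
  IsCSet X ∧ (0 : E) ∈ interior X

/-- The polar set 𝒳* = {y : ⟨y,x⟩ ≤ 1 for all x ∈ 𝒳}. -/
def polarSet {E : Type*} [NormedAddCommGroup E] [InnerProductSpace ℝ E] (X : Set E) : Set E :=
  {y | ∀ x ∈ X, inner ℝ y x ≤ (1 : ℝ)}

/-- The Minkowski (gauge) function γ(𝒳,y) = inf{η ≥ 0 : y ∈ η𝒳}. -/
def mgauge {E : Type*} [NormedAddCommGroup E] [NormedSpace ℝ E] (X : Set E) (y : E) : ℝ :=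
  sInf {η : ℝ | 0 ≤ η ∧ y ∈ η • X}

variable {n m : ℕ}

/-- The map M = (A B) : ℝ^{n+m} → ℝⁿ, M(x,u) = Ax + Bu. -/
def Mfwd (A : Matrix (Fin n) (Fin n) ℝ) (B : Matrix (Fin n) (Fin m) ℝ) (w : Rsp2 n m) : Rsp n :=
  Matrix.toEuclideanLin A w.ofLp.1 + Matrix.toEuclideanLin B w.ofLp.2

/-- The transpose map Mᵀ : ℝⁿ → ℝ^{n+m}, Mᵀp = (Aᵀp, Bᵀp). -/
def Mtr (A : Matrix (Fin n) (Fin n) ℝ) (B : Matrix (Fin n) (Fin m) ℝ) (p : Rsp n) : Rsp2 n m :=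
  WithLp.toLp 2 (Matrix.toEuclideanLin Aᵀ p, Matrix.toEuclideanLin Bᵀ p)

/-- The projection P_x : ℝ^{n+m} → ℝⁿ, (x,u) ↦ x. -/
def Pxproj : Rsp2 n m → Rsp n := fun w => w.ofLp.1

/-!
The gauge of the polar of a bounded set `D ∋ 0` is its support function `σ_D`, and by the bipolar
theorem `σ_{X*} = γ(X, ·)` for a proper C-set `X`. Support functions add over Minkowski sums and
`σ_{Mᵀ𝒫*}(w) = σ_{𝒫*}(M w)`, so
`γ((𝒞* ⊕ Mᵀ𝒫*)*, w) = σ_{𝒞*}(w) + σ_{𝒫*}(M w) = γ(𝒞, w) + γ(𝒫, M w)`.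
-/

open scoped InnerProductSpace

section SupportFunction

variable {E F : Type*} [NormedAddCommGroup E] [InnerProductSpace ℝ E]
  [NormedAddCommGroup F] [InnerProductSpace ℝ F]

def supportFunction (X : Set E) (w : E) : ℝ :=
  sSup ((fun x => ⟪w, x⟫_ℝ) '' X)

theorem mgauge_eq_gauge {X : Set E} (h0 : (0 : E) ∈ X) : mgauge X = gauge X := by
  ext y
  rcases eq_or_ne y 0 with rfl | hy
  · rw [gauge_zero]
    refine le_antisymm (csInf_le ⟨0, fun _ hη => hη.1⟩ ⟨le_rfl, 0, h0, smul_zero 0⟩)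
      (le_csInf ⟨1, zero_le_one, 0, h0, smul_zero 1⟩ fun _ hη => hη.1)
  · have hy0 : y ∉ (0 : ℝ) • X := by simp [Set.zero_smul_set ⟨0, h0⟩, hy]
    unfold mgauge gauge
    congr 1
    ext η
    simp only [Set.mem_ofPred_eq, and_congr_left_iff]
    exact fun hη => ⟨fun hη0 => hη0.lt_of_ne (by rintro rfl; exact hy0 hη), le_of_lt⟩

theorem zero_mem_polarSet (X : Set E) : (0 : E) ∈ polarSet X := by
  intro x _
  simp

theorem isClosed_polarSet (X : Set E) : IsClosed (polarSet X) := by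
  have : polarSet X = ⋂ x ∈ X, {y : E | ⟪y, x⟫_ℝ ≤ 1} := by
    ext y
    simp [polarSet]
  rw [this]
  exact isClosed_biInter fun x _ => isClosed_le (by fun_prop) continuous_const

theorem isBounded_polarSet {X : Set E} (h0 : (0 : E) ∈ interior X) :
    Bornology.IsBounded (polarSet X) := by
  obtain ⟨ε, hε, hball⟩ := Metric.mem_nhds_iff.1 (mem_interior_iff_mem_nhds.1 h0)
  refine isBounded_iff_forall_norm_le.2 ⟨2 / ε, fun y hy => ?_⟩
  rcases eq_or_ne y 0 with rfl | hy0
  · rw [norm_zero]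
    positivity
  have hnorm : 0 < ‖y‖ := norm_pos_iff.2 hy0
  have hmem : (ε / 2 / ‖y‖) • y ∈ X := hball <| by
    rw [Metric.mem_ball, dist_zero_right, norm_smul, Real.norm_of_nonneg (by positivity),
      div_mul_cancel₀ _ hnorm.ne']
    linarith
  have hle := hy _ hmem
  rw [real_inner_smul_right, real_inner_self_eq_norm_sq] at hle
  have hbound : ε / 2 * ‖y‖ ≤ 1 := by
    calc ε / 2 * ‖y‖ = ε / 2 / ‖y‖ * ‖y‖ ^ 2 := by field_simp
      _ ≤ 1 := hle
  rw [le_div_iff₀ hε]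
  linarith

theorem bddAbove_inner_image {X : Set E} (hX : Bornology.IsBounded X) (w : E) :
    BddAbove ((fun x => ⟪w, x⟫_ℝ) '' X) := by
  obtain ⟨c, hc⟩ := isBounded_iff_forall_norm_le.1 hX
  refine ⟨‖w‖ * c, ?_⟩
  rintro _ ⟨x, hx, rfl⟩
  exact (real_inner_le_norm w x).trans (mul_le_mul_of_nonneg_left (hc x hx) (norm_nonneg w))

theorem gauge_polarSet {X : Set E} (hX : Bornology.IsBounded X) (h0 : (0 : E) ∈ X) (w : E) :
    gauge (polarSet X) w = supportFunction X w := by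
  have hbdd := bddAbove_inner_image hX w
  have hnonneg : 0 ≤ supportFunction X w := le_csSup_of_le hbdd ⟨0, h0, rfl⟩ (by simp)
  have hmem : ∀ r, 0 < r → (w ∈ r • polarSet X ↔ supportFunction X w ≤ r) := by
    intro r hr
    rw [Set.mem_smul_set_iff_inv_smul_mem₀ hr.ne', supportFunction, csSup_le_iff hbdd
      ((Set.nonempty_of_mem h0).image _), Set.forall_mem_image]
    refine forall₂_congr fun x _ => ?_
    rw [real_inner_smul_left, inv_mul_le_iff₀ hr, mul_one]
  refine le_antisymm (le_of_forall_pos_le_add fun ε hε => ?_) ?_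
  · exact gauge_le_of_mem (by linarith) ((hmem _ (by linarith)).2 (by linarith))
  · refine le_csInf ⟨supportFunction X w + 1, by linarith,
      (hmem _ (by linarith)).2 (by linarith)⟩ ?_
    rintro r ⟨hr, hw⟩
    exact (hmem r hr).1 hw

theorem polarSet_polarSet [CompleteSpace E] {X : Set E} (hcl : IsClosed X) (hconv : Convex ℝ X)
    (h0 : (0 : E) ∈ X) : polarSet (polarSet X) = X := by
  refine Set.Subset.antisymm (fun z hz => ?_) fun x hx y hy => real_inner_comm x y ▸ hy x hx
  by_contra hzX
  obtain ⟨f, u, hfX, hfz⟩ := geometric_hahn_banach_closed_point hconv hcl hzX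
  have hu : 0 < u := by simpa using hfX 0 h0
  set v : E := (InnerProductSpace.toDual ℝ E).symm f
  have hv : ∀ x, ⟪v, x⟫_ℝ = f x := fun x => InnerProductSpace.toDual_symm_apply
  have hvX : u⁻¹ • v ∈ polarSet X := fun x hx => by
    rw [real_inner_smul_left, hv, inv_mul_le_iff₀ hu, mul_one]
    exact (hfX x hx).le
  have hvz := hz _ hvX
  rw [real_inner_comm, real_inner_smul_left, hv, inv_mul_le_iff₀ hu, mul_one] at hvz
  exact hfz.not_ge hvz

theorem supportFunction_polarSet [CompleteSpace E] {X : Set E} (hcl : IsClosed X)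
    (hconv : Convex ℝ X) (h0 : (0 : E) ∈ interior X) (w : E) :
    supportFunction (polarSet X) w = gauge X w := by
  rw [← gauge_polarSet (isBounded_polarSet h0) (zero_mem_polarSet X),
    polarSet_polarSet hcl hconv (interior_subset h0)]

theorem supportFunction_add {S T : Set E} (hS : Bornology.IsBounded S) (hT : Bornology.IsBounded T)
    (hS₀ : S.Nonempty) (hT₀ : T.Nonempty) (w : E) :
    supportFunction (S + T) w = supportFunction S w + supportFunction T w := by
  have himage := Set.image_add (innerₛₗ ℝ w) (s := S) (t := T)
  rw [coe_innerₛₗ_apply] at himage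
  rw [supportFunction, himage, csSup_add (hS₀.image _) (bddAbove_inner_image hS w) (hT₀.image _)
    (bddAbove_inner_image hT w)]
  rfl

theorem supportFunction_image_of_inner_eq {f : F → E} {w : E} {v : F}
    (hf : ∀ q, ⟪w, f q⟫_ℝ = ⟪v, q⟫_ℝ) (X : Set F) :
    supportFunction (f '' X) w = supportFunction X v := by
  rw [supportFunction, supportFunction, Set.image_image]
  simp only [hf]

end SupportFunction

section Transpose

variable (A : Matrix (Fin n) (Fin n) ℝ) (B : Matrix (Fin n) (Fin m) ℝ)

theorem continuous_Mtr : Continuous (Mtr A B) := by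
  unfold Mtr
  fun_prop

theorem Mtr_zero : Mtr A B 0 = 0 := by
  simp [Mtr]

theorem inner_Mtr (w : Rsp2 n m) (q : Rsp n) : ⟪w, Mtr A B q⟫_ℝ = ⟪Mfwd A B w, q⟫_ℝ := by
  simp only [WithLp.prod_inner_apply, Mtr, Mfwd, ← conjTranspose_eq_transpose_of_trivial,
    toEuclideanLin_conjTranspose_eq_adjoint, LinearMap.adjoint_inner_right, inner_add_left]

end Transpose

/-- γ(𝒞,(x,u)) + γ(𝒫, Ax+Bu) = γ((𝒞* ⊕ Mᵀ𝒫*)*, (x,u)). -/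
theorem stmt_0 (n m : ℕ) (C : Set (Rsp2 n m)) (P : Set (Rsp n))
    (hC : IsProperCSet C) (hP : IsProperCSet P)
    (A : Matrix (Fin n) (Fin n) ℝ) (B : Matrix (Fin n) (Fin m) ℝ) :
    ∀ (x : Rsp n) (u : Rsp m),
      mgauge C (WithLp.toLp 2 (x, u) : Rsp2 n m) + mgauge P (Mfwd A B (WithLp.toLp 2 (x, u))) =
        mgauge (polarSet (polarSet C + Mtr A B '' polarSet P)) (WithLp.toLp 2 (x, u) : Rsp2 n m) := by
  intro x u
  obtain ⟨⟨hCc, hCconv, hC0⟩, hCint⟩ := hC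
  obtain ⟨⟨hPc, hPconv, hP0⟩, hPint⟩ := hP
  have hCpol := isBounded_polarSet hCint
  have hMPpol : Bornology.IsBounded (Mtr A B '' polarSet P) :=
    ((Metric.isCompact_of_isClosed_isBounded (isClosed_polarSet P) (isBounded_polarSet hPint)).image
      (continuous_Mtr A B)).isBounded
  have hMP₀ : (0 : Rsp2 n m) ∈ Mtr A B '' polarSet P := ⟨0, zero_mem_polarSet P, Mtr_zero A B⟩
  rw [mgauge_eq_gauge hC0, mgauge_eq_gauge hP0, mgauge_eq_gauge (zero_mem_polarSet _),
    gauge_polarSet (hCpol.add hMPpol) ⟨0, zero_mem_polarSet C, 0, hMP₀, add_zero 0⟩,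
    supportFunction_add hCpol hMPpol ⟨0, zero_mem_polarSet C⟩ ⟨0, hMP₀⟩,
    supportFunction_image_of_inner_eq (inner_Mtr A B _),
    supportFunction_polarSet hCc.isClosed hCconv hCint,
    supportFunction_polarSet hPc.isClosed hPconv hPint]
end
end

section
/- Let 𝒞 ⊆ ℝ^{n+m} be a proper C-set, let A ∈ ℝ^{n×n}, B ∈ ℝ^{n×m}, and let S ⊆ ℝⁿ be a C-set. Define the sequences 𝒯₁ = (𝒞* ⊕ MᵀS)*, 𝒫₁ = P_x𝒯₁, and for k ≥ 1, 𝒯_{k+1} = (𝒞* ⊕ Mᵀ𝒫_k*)*, 𝒫_{k+1} = P_x𝒯_{k+1}. If S ⊆ 𝒫₁*, then for every k ≥ 1, 𝒫_{k+1} ⊆ 𝒫_k. -/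
/-! Taking polars reverses inclusions, so the step 𝒫 ↦ P_x (𝒞* ⊕ Mᵀ𝒫*)* is monotone.
The hypothesis S ⊆ 𝒫₁* gives 𝒫₂ ⊆ 𝒫₁, and monotonicity of the step propagates this
inclusion along the sequence. -/

open Pointwise Filter Topology Matrix

noncomputable section

variable {n m : ℕ}

section Polar

variable {E : Type*} [NormedAddCommGroup E] [InnerProductSpace ℝ E]

theorem polarSet_antitone : Antitone (polarSet : Set E → Set E) :=
  fun _ _ h _ hy x hx => hy x (h hx)

theorem antitone_image_polarSet_add_image {F G : Type*} (g : E → F) (D : Set E) (f : G → E) :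
    Antitone fun Y : Set G => g '' polarSet (D + f '' Y) :=
  fun _ _ h => Set.image_mono (polarSet_antitone (Set.add_subset_add_left (Set.image_mono h)))

end Polar

theorem stmt_10_general (n m : ℕ) (C : Set (Rsp2 n m))
    (A : Matrix (Fin n) (Fin n) ℝ) (B : Matrix (Fin n) (Fin m) ℝ)
    (S : Set (Rsp n))
    (P : ℕ → Set (Rsp n))
    (hP0 : P 0 = Pxproj '' polarSet (polarSet C + Mtr A B '' S))
    (hPs : ∀ k : ℕ, P (k + 1) = Pxproj '' polarSet (polarSet C + Mtr A B '' polarSet (P k)))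
    (hmono : S ⊆ polarSet (P 0)) :
    ∀ k : ℕ, P (k + 1) ⊆ P k := by
  have hstep := antitone_image_polarSet_add_image Pxproj (polarSet C) (Mtr A B)
  intro k
  induction k with
  | zero => exact (hPs 0).trans_subset ((hstep hmono).trans_eq hP0.symm)
  | succ k ih =>
    exact (hPs (k + 1)).trans_subset ((hstep (polarSet_antitone ih)).trans_eq (hPs k).symm)

/-- if S ⊆ 𝒫₁*, the iterates are monotonically nonincreasing. -/
theorem stmt_10 (n m : ℕ) (C : Set (Rsp2 n m)) (hC : IsProperCSet C)
    (A : Matrix (Fin n) (Fin n) ℝ) (B : Matrix (Fin n) (Fin m) ℝ)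
    (S : Set (Rsp n)) (hS : IsCSet S)
    (P : ℕ → Set (Rsp n))
    (hP0 : P 0 = Pxproj '' polarSet (polarSet C + Mtr A B '' S))
    (hPs : ∀ k : ℕ, P (k + 1) = Pxproj '' polarSet (polarSet C + Mtr A B '' polarSet (P k)))
    (hmono : S ⊆ polarSet (P 0)) :
    ∀ k : ℕ, P (k + 1) ⊆ P k :=
  stmt_10_general n m C A B S P hP0 hPs hmono
end
end
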